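/- arXiv:1907.04162 — 4 statements merged into one kernel-verified Lean document; each statement's English description precedes it below -/
import Mathlib

section
/- Let μ ∈ ℝ, σ > 0, q > 0, δ > 0, and let W^{(q)}, 𝕎^{(q)} be the explicit q-scale functions of the linear Brownian motion model. Then for all x ≥ 0 and z > 0: W^{(q)}(x+z) + δ∫₀ˣ 𝕎^{(q)}(x−y) W^{(q)′}(y+z) dy = (σ²/2) W^{(q)′}(z) 𝕎^{(q)}(x) + (W^{(q)}(z)/ρ^Y)(ρ₁^Y e^{ρ₂^Y x} + ρ₂^Y e^{−ρ₁^Y x}), where W^{(q)′} denotes the derivative of W^{(q)} on (0,∞). -/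
open MeasureTheory Real

/- Linear Brownian motion model: X_t = μt + σB_t, Y_t = X_t − δt.  Explicit
   q-scale functions W^{(q)} (for X) and 𝕎^{(q)} (for Y), given on [0,∞) by
   the smooth formulas below. -/

noncomputable def rho1 (μ σ q : ℝ) : ℝ := (Real.sqrt (μ ^ 2 + 2 * q * σ ^ 2) + μ) / σ ^ 2

noncomputable def rho2 (μ σ q : ℝ) : ℝ := (Real.sqrt (μ ^ 2 + 2 * q * σ ^ 2) - μ) / σ ^ 2

noncomputable def rho1Y (μ σ q δ : ℝ) : ℝ := rho1 (μ - δ) σ q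

noncomputable def rho2Y (μ σ q δ : ℝ) : ℝ := rho2 (μ - δ) σ q

noncomputable def rhoY (μ σ q δ : ℝ) : ℝ := rho1Y μ σ q δ + rho2Y μ σ q δ

/-- The q-scale function W^{(q)} of X (its formula on [0,∞)). -/
noncomputable def Wq (μ σ q x : ℝ) : ℝ :=
  2 / (σ ^ 2 * (rho1 μ σ q + rho2 μ σ q)) *
    (Real.exp (rho2 μ σ q * x) - Real.exp (-(rho1 μ σ q) * x))

/-- The q-scale function 𝕎^{(q)} of Y (its formula on [0,∞)). -/
noncomputable def WWq (μ σ q δ x : ℝ) : ℝ := Wq (μ - δ) σ q x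

lemma abs_lt_sqrt (m σ q : ℝ) (hσ : 0 < σ) (hq : 0 < q) :
    |m| < Real.sqrt (m ^ 2 + 2 * q * σ ^ 2) := by
  rw [Real.lt_sqrt (abs_nonneg m), sq_abs]
  nlinarith [sq_nonneg σ, mul_pos hq (mul_pos hσ hσ)]

lemma rho1_pos (m σ q : ℝ) (hσ : 0 < σ) (hq : 0 < q) : 0 < rho1 m σ q := by
  have h := abs_lt_sqrt m σ q hσ hq
  have := neg_abs_le m
  unfold rho1
  have : 0 < σ ^ 2 := by positivity
  apply div_pos _ this
  nlinarith [neg_abs_le m]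

lemma rho2_pos (m σ q : ℝ) (hσ : 0 < σ) (hq : 0 < q) : 0 < rho2 m σ q := by
  have h := abs_lt_sqrt m σ q hσ hq
  unfold rho2
  have : 0 < σ ^ 2 := by positivity
  apply div_pos _ this
  nlinarith [le_abs_self m]

lemma rho_prod (m σ q : ℝ) (hσ : 0 < σ) (hq : 0 < q) :
    rho1 m σ q * rho2 m σ q = 2 * q / σ ^ 2 := by
  unfold rho1 rho2
  have hs : Real.sqrt (m ^ 2 + 2 * q * σ ^ 2) ^ 2 = m ^ 2 + 2 * q * σ ^ 2 :=
    Real.sq_sqrt (by positivity)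
  have hσ2 : (σ : ℝ) ^ 2 ≠ 0 := by positivity
  field_simp
  nlinarith [hs]

lemma rho_diff (m σ q : ℝ) (hσ : 0 < σ) :
    rho1 m σ q - rho2 m σ q = 2 * m / σ ^ 2 := by
  unfold rho1 rho2
  have hσ2 : (σ : ℝ) ^ 2 ≠ 0 := by positivity
  field_simp
  ring

lemma rho1_strictMono (m m' σ q : ℝ) (hσ : 0 < σ) (hq : 0 < q) (h : m' < m) :
    rho1 m' σ q < rho1 m σ q := by
  unfold rho1
  have h1 := abs_lt_sqrt m σ q hσ hq
  have h2 := abs_lt_sqrt m' σ q hσ hq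
  set s := Real.sqrt (m ^ 2 + 2 * q * σ ^ 2) with hsdef
  set s' := Real.sqrt (m' ^ 2 + 2 * q * σ ^ 2) with hsdef'
  have hs1 : s ^ 2 = m ^ 2 + 2 * q * σ ^ 2 := Real.sq_sqrt (by positivity)
  have hs2 : s' ^ 2 = m' ^ 2 + 2 * q * σ ^ 2 := Real.sq_sqrt (by positivity)
  have hσ2 : (0:ℝ) < σ ^ 2 := by positivity
  rw [div_lt_div_iff_of_pos_right hσ2]
  have hkey : 0 < (m - m') * (m + m' + s + s') := by
    apply mul_pos (by linarith)
    nlinarith [neg_abs_le m, neg_abs_le m']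
  nlinarith [hkey, hs1, hs2, neg_abs_le m, neg_abs_le m', le_abs_self m, le_abs_self m']

lemma rho2_strictAnti (m m' σ q : ℝ) (hσ : 0 < σ) (hq : 0 < q) (h : m' < m) :
    rho2 m σ q < rho2 m' σ q := by
  unfold rho2
  have h1 := abs_lt_sqrt m σ q hσ hq
  have h2 := abs_lt_sqrt m' σ q hσ hq
  set s := Real.sqrt (m ^ 2 + 2 * q * σ ^ 2) with hsdef
  set s' := Real.sqrt (m' ^ 2 + 2 * q * σ ^ 2) with hsdef'
  have hs1 : s ^ 2 = m ^ 2 + 2 * q * σ ^ 2 := Real.sq_sqrt (by positivity)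
  have hs2 : s' ^ 2 = m' ^ 2 + 2 * q * σ ^ 2 := Real.sq_sqrt (by positivity)
  have hσ2 : (0:ℝ) < σ ^ 2 := by positivity
  rw [div_lt_div_iff_of_pos_right hσ2]
  have hkey : 0 < (m - m') * (s + s' - m - m') := by
    apply mul_pos (by linarith)
    nlinarith [le_abs_self m, le_abs_self m']
  nlinarith [hkey, hs1, hs2, neg_abs_le m, neg_abs_le m', le_abs_self m, le_abs_self m']

lemma Wq_hasDerivAt (μ σ q t : ℝ) :
    HasDerivAt (Wq μ σ q)
      (2 / (σ ^ 2 * (rho1 μ σ q + rho2 μ σ q)) *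
        (rho2 μ σ q * Real.exp (rho2 μ σ q * t) +
          rho1 μ σ q * Real.exp (-(rho1 μ σ q) * t))) t := by
  have h1 : HasDerivAt (fun x : ℝ => Real.exp (rho2 μ σ q * x))
      (Real.exp (rho2 μ σ q * t) * (rho2 μ σ q * 1)) t :=
    ((hasDerivAt_id t).const_mul _).exp
  have h2 : HasDerivAt (fun x : ℝ => Real.exp (-(rho1 μ σ q) * x))
      (Real.exp (-(rho1 μ σ q) * t) * (-(rho1 μ σ q) * 1)) t :=
    ((hasDerivAt_id t).const_mul _).exp
  have h3 := (h1.sub h2).const_mul (2 / (σ ^ 2 * (rho1 μ σ q + rho2 μ σ q)))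
  refine h3.congr_deriv ?_
  ring

lemma Wq_deriv (μ σ q t : ℝ) :
    deriv (Wq μ σ q) t =
      2 / (σ ^ 2 * (rho1 μ σ q + rho2 μ σ q)) *
        (rho2 μ σ q * Real.exp (rho2 μ σ q * t) +
          rho1 μ σ q * Real.exp (-(rho1 μ σ q) * t)) :=
  (Wq_hasDerivAt μ σ q t).deriv

lemma integral_aux (C1 C2 r1 r2 a b x z : ℝ) (h1 : r2 - a ≠ 0) (h2 : r2 + b ≠ 0)
    (h3 : r1 + a ≠ 0) (h4 : b - r1 ≠ 0) :
    ∫ y in (0:ℝ)..x,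
        (C2 * (Real.exp (a * (x - y)) - Real.exp (-b * (x - y)))) *
          (C1 * (r2 * Real.exp (r2 * (y + z)) + r1 * Real.exp (-r1 * (y + z))))
      = (C2 * C1) *
          ((r2 / (r2 - a) * Real.exp (r2 * (x + z)) -
              r2 / (r2 + b) * Real.exp (r2 * (x + z)) -
              r1 / (r1 + a) * Real.exp (-r1 * (x + z)) -
              r1 / (b - r1) * Real.exp (-r1 * (x + z))) -
           (r2 / (r2 - a) * Real.exp (a * x) * Real.exp (r2 * z) -
              r2 / (r2 + b) * Real.exp (-b * x) * Real.exp (r2 * z) -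
              r1 / (r1 + a) * Real.exp (a * x) * Real.exp (-r1 * z) -
              r1 / (b - r1) * Real.exp (-b * x) * Real.exp (-r1 * z))) := by
  set F : ℝ → ℝ := fun y => (C2 * C1) *
      (r2 / (r2 - a) * (Real.exp (a * (x - y)) * Real.exp (r2 * (y + z))) -
       r2 / (r2 + b) * (Real.exp (-b * (x - y)) * Real.exp (r2 * (y + z))) -
       r1 / (r1 + a) * (Real.exp (a * (x - y)) * Real.exp (-r1 * (y + z))) -
       r1 / (b - r1) * (Real.exp (-b * (x - y)) * Real.exp (-r1 * (y + z)))) with hF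
  have hderiv : ∀ y ∈ Set.uIcc (0:ℝ) x,
      HasDerivAt F
        ((C2 * (Real.exp (a * (x - y)) - Real.exp (-b * (x - y)))) *
          (C1 * (r2 * Real.exp (r2 * (y + z)) + r1 * Real.exp (-r1 * (y + z))))) y := by
    intro y _
    have hA : HasDerivAt (fun y : ℝ => Real.exp (a * (x - y)))
        (Real.exp (a * (x - y)) * (a * (0 - 1))) y :=
      (((hasDerivAt_const y x).sub (hasDerivAt_id y)).const_mul a).exp
    have hB : HasDerivAt (fun y : ℝ => Real.exp (-b * (x - y)))
        (Real.exp (-b * (x - y)) * (-b * (0 - 1))) y :=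
      (((hasDerivAt_const y x).sub (hasDerivAt_id y)).const_mul (-b)).exp
    have hG1 : HasDerivAt (fun y : ℝ => Real.exp (r2 * (y + z)))
        (Real.exp (r2 * (y + z)) * (r2 * 1)) y :=
      (((hasDerivAt_id y).add_const z).const_mul r2).exp
    have hG2 : HasDerivAt (fun y : ℝ => Real.exp (-r1 * (y + z)))
        (Real.exp (-r1 * (y + z)) * (-r1 * 1)) y :=
      (((hasDerivAt_id y).add_const z).const_mul (-r1)).exp
    have hT :=
      ((((hA.mul hG1).const_mul (r2 / (r2 - a))).sub
          ((hB.mul hG1).const_mul (r2 / (r2 + b)))).sub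
        ((hA.mul hG2).const_mul (r1 / (r1 + a)))).sub
        ((hB.mul hG2).const_mul (r1 / (b - r1)))
    have hT2 := hT.const_mul (C2 * C1)
    refine hT2.congr_deriv ?_
    field_simp
    ring
  have hcont : IntervalIntegrable
      (fun y => (C2 * (Real.exp (a * (x - y)) - Real.exp (-b * (x - y)))) *
        (C1 * (r2 * Real.exp (r2 * (y + z)) + r1 * Real.exp (-r1 * (y + z)))))
      volume 0 x := by
    apply Continuous.intervalIntegrable
    continuity
  rw [intervalIntegral.integral_eq_sub_of_hasDerivAt hderiv hcont, hF]
  simp only [sub_self, mul_zero, zero_add, sub_zero, Real.exp_zero, one_mul, mul_one]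
  ring

set_option maxHeartbeats 3000000 in
lemma key_algebra (σ δ r1 r2 a b H1 H2 F1 F2 G1 G2 : ℝ)
    (hσ : σ ≠ 0) (hr1 : 0 < r1) (hr2 : 0 < r2) (ha : 0 < a) (hb : 0 < b)
    (h1 : r2 - a ≠ 0) (h4 : b - r1 ≠ 0)
    (hab : r1 * r2 = a * b) (hδ : σ ^ 2 * (r1 - r2 - b + a) = 2 * δ) :
    2 / (σ ^ 2 * (r1 + r2)) * (H1 - H2)
      + δ * ((2 / (σ ^ 2 * (a + b)) * (2 / (σ ^ 2 * (r1 + r2)))) *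
          ((r2 / (r2 - a) * H1 - r2 / (r2 + b) * H1 -
              r1 / (r1 + a) * H2 - r1 / (b - r1) * H2)
            - (r2 / (r2 - a) * F1 * G1 - r2 / (r2 + b) * F2 * G1 -
                r1 / (r1 + a) * F1 * G2 - r1 / (b - r1) * F2 * G2)))
      = σ ^ 2 / 2 * (2 / (σ ^ 2 * (r1 + r2)) * (r2 * G1 + r1 * G2)) *
            (2 / (σ ^ 2 * (a + b)) * (F1 - F2))
        + (2 / (σ ^ 2 * (r1 + r2)) * (G1 - G2)) / (b + a) * (b * F1 + a * F2) := by
  have ha0 : a ≠ 0 := ne_of_gt ha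
  have h2 : r2 + b ≠ 0 := ne_of_gt (add_pos hr2 hb)
  have h3 : r1 + a ≠ 0 := ne_of_gt (add_pos hr1 ha)
  have hab0 : a + b ≠ 0 := ne_of_gt (add_pos ha hb)
  have hba0 : b + a ≠ 0 := ne_of_gt (add_pos hb ha)
  have hr12 : r1 + r2 ≠ 0 := ne_of_gt (add_pos hr1 hr2)
  have hbval : b = r1 * r2 / a := by
    rw [eq_div_iff ha0]; linarith [hab]
  subst hbval
  have hδval : δ = σ ^ 2 * (r1 - r2 - r1 * r2 / a + a) / 2 := by linarith [hδ]
  subst hδval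
  have h5 : -(a * r1) + r1 * r2 ≠ 0 := by
    have : -(a * r1) + r1 * r2 = r1 * (r2 - a) := by ring
    rw [this]
    exact mul_ne_zero (ne_of_gt hr1) h1
  have h6 : r1 * r2 - a * r1 ≠ 0 := by
    have : r1 * r2 - a * r1 = r1 * (r2 - a) := by ring
    rw [this]
    exact mul_ne_zero (ne_of_gt hr1) h1
  field_simp
  ring

set_option maxHeartbeats 1000000 in
theorem refracted_scale_function_brownian (μ σ q δ : ℝ) (hσ : 0 < σ) (hq : 0 < q)
    (hδ : 0 < δ) (x z : ℝ) (hx : 0 ≤ x) (hz : 0 < z) :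
    Wq μ σ q (x + z) +
        δ * ∫ y in (0 : ℝ)..x, WWq μ σ q δ (x - y) * deriv (Wq μ σ q) (y + z)
      = σ ^ 2 / 2 * deriv (Wq μ σ q) z * WWq μ σ q δ x +
        Wq μ σ q z / rhoY μ σ q δ *
          (rho1Y μ σ q δ * Real.exp (rho2Y μ σ q δ * x) +
            rho2Y μ σ q δ * Real.exp (-(rho1Y μ σ q δ) * x)) := by
  have hσ0 : σ ≠ 0 := ne_of_gt hσ
  have hμδ : μ - δ < μ := by linarith
  have hr1 : 0 < rho1 μ σ q := rho1_pos μ σ q hσ hq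
  have hr2 : 0 < rho2 μ σ q := rho2_pos μ σ q hσ hq
  have ha : 0 < rho2 (μ - δ) σ q := rho2_pos (μ - δ) σ q hσ hq
  have hb : 0 < rho1 (μ - δ) σ q := rho1_pos (μ - δ) σ q hσ hq
  have h1 : rho2 μ σ q - rho2 (μ - δ) σ q ≠ 0 :=
    sub_ne_zero_of_ne (ne_of_lt (rho2_strictAnti μ (μ - δ) σ q hσ hq hμδ))
  have h2 : rho2 μ σ q + rho1 (μ - δ) σ q ≠ 0 := ne_of_gt (add_pos hr2 hb)
  have h3 : rho1 μ σ q + rho2 (μ - δ) σ q ≠ 0 := ne_of_gt (add_pos hr1 ha)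
  have h4 : rho1 (μ - δ) σ q - rho1 μ σ q ≠ 0 :=
    sub_ne_zero_of_ne (ne_of_lt (rho1_strictMono μ (μ - δ) σ q hσ hq hμδ))
  have hab : rho1 μ σ q * rho2 μ σ q = rho2 (μ - δ) σ q * rho1 (μ - δ) σ q := by
    rw [mul_comm (rho2 (μ - δ) σ q), rho_prod μ σ q hσ hq, rho_prod (μ - δ) σ q hσ hq]
  have hδrel : σ ^ 2 * (rho1 μ σ q - rho2 μ σ q - rho1 (μ - δ) σ q + rho2 (μ - δ) σ q)
      = 2 * δ := by
    rw [show rho1 μ σ q - rho2 μ σ q - rho1 (μ - δ) σ q + rho2 (μ - δ) σ q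
        = (rho1 μ σ q - rho2 μ σ q) - (rho1 (μ - δ) σ q - rho2 (μ - δ) σ q) by ring,
      rho_diff μ σ q hσ, rho_diff (μ - δ) σ q hσ]
    field_simp
    ring
  simp only [WWq, Wq, rho1Y, rho2Y, rhoY, Wq_deriv]
  rw [integral_aux (2 / (σ ^ 2 * (rho1 μ σ q + rho2 μ σ q)))
    (2 / (σ ^ 2 * (rho1 (μ - δ) σ q + rho2 (μ - δ) σ q)))
    (rho1 μ σ q) (rho2 μ σ q) (rho2 (μ - δ) σ q) (rho1 (μ - δ) σ q) x z h1 h2 h3 h4]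
  linear_combination
    key_algebra σ δ (rho1 μ σ q) (rho2 μ σ q) (rho2 (μ - δ) σ q) (rho1 (μ - δ) σ q)
      (Real.exp (rho2 μ σ q * (x + z))) (Real.exp (-(rho1 μ σ q) * (x + z)))
      (Real.exp (rho2 (μ - δ) σ q * x)) (Real.exp (-(rho1 (μ - δ) σ q) * x))
      (Real.exp (rho2 μ σ q * z)) (Real.exp (-(rho1 μ σ q) * z))
      hσ0 hr1 hr2 ha hb h1 h4 hab hδrel
end

section
/- Let μ ∈ ℝ, σ > 0, q > 0, r > 0, and let W^{(q)} be the explicit q-scale function of the linear Brownian motion model, with derivative W^{(q)′}(z) = (2/(σ²ρ))(ρ₂ e^{ρ₂ z} + ρ₁ e^{−ρ₁ z}). Then ∫₀^∞ W^{(q)′}(z) (z/r) (2πσ²r)^{−1/2} e^{−(z−μr)²/(2σ²r)} dz = (2/√(2πσ²r)) e^{−rμ²/(2σ²)} + ρ₂ e^{qr} − ρ e^{qr} Φ(−r√(μ²+2qσ²)/(σ√r)), where Φ is the standard normal cumulative distribution function. -/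
open MeasureTheory Real

noncomputable def rho (μ σ q : ℝ) : ℝ := rho1 μ σ q + rho2 μ σ q

/-- The derivative W^{(q)′} of the q-scale function of X. -/
noncomputable def Wq' (μ σ q z : ℝ) : ℝ :=
  2 / (σ ^ 2 * rho μ σ q) *
    (rho2 μ σ q * Real.exp (rho2 μ σ q * z) + rho1 μ σ q * Real.exp (-(rho1 μ σ q) * z))

/-- Standard normal cumulative distribution function. -/
noncomputable def stdNormalCDF (x : ℝ) : ℝ :=
  ∫ t in Set.Iic x, (Real.sqrt (2 * Real.pi))⁻¹ * Real.exp (-t ^ 2 / 2)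


lemma integral_Ioi_comp_sub (f : ℝ → ℝ) (a d : ℝ) :
    ∫ x in Set.Ioi a, f (x - d) = ∫ x in Set.Ioi (a - d), f x := by
  rw [← integral_indicator measurableSet_Ioi, ← integral_indicator measurableSet_Ioi,
    ← integral_sub_right_eq_self (fun x => (Set.Ioi (a - d)).indicator f x) d]
  congr 1; ext x
  rw [Set.indicator_apply, Set.indicator_apply]
  simp [Set.mem_Ioi, sub_lt_sub_iff_right, lt_sub_iff_add_lt]

-- integrability of gaussian and x*gaussian (shifted)
lemma gauss_integrable {v : ℝ} (hv : 0 < v) (m : ℝ) :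
    Integrable (fun z : ℝ => Real.exp (-(z - m) ^ 2 / (2 * v))) := by
  have h : Integrable (fun z : ℝ => Real.exp (-(2 * v)⁻¹ * z ^ 2)) :=
    integrable_exp_neg_mul_sq (by positivity)
  have := h.comp_sub_right m
  refine this.congr ?_
  filter_upwards with z
  congr 1
  field_simp

lemma gauss_mul_integrable {v : ℝ} (hv : 0 < v) (m : ℝ) :
    Integrable (fun z : ℝ => z * Real.exp (-(z - m) ^ 2 / (2 * v))) := by
  have h1 : Integrable (fun z : ℝ => z * Real.exp (-(2 * v)⁻¹ * z ^ 2)) :=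
    integrable_mul_exp_neg_mul_sq (by positivity)
  have h2 := (h1.comp_sub_right m).add ((gauss_integrable hv m).const_mul m)
  refine h2.congr ?_
  filter_upwards with z
  have h3 : -(2 * v)⁻¹ * (z - m) ^ 2 = -(z - m) ^ 2 / (2 * v) := by
    field_simp
  simp only [Pi.add_apply, h3]
  ring

-- FTC part: ∫_{0}^{∞} (z-m) e^{-(z-m)^2/(2v)} = v e^{-m^2/(2v)}
lemma gauss_ftc {v : ℝ} (hv : 0 < v) (m : ℝ) :
    ∫ z in Set.Ioi (0:ℝ), (z - m) * Real.exp (-(z - m) ^ 2 / (2 * v))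
      = v * Real.exp (-m ^ 2 / (2 * v)) := by
  have hderiv : ∀ x ∈ Set.Ici (0:ℝ), HasDerivAt
      (fun z => -v * Real.exp (-(z - m) ^ 2 / (2 * v)))
      ((x - m) * Real.exp (-(x - m) ^ 2 / (2 * v))) x := by
    intro x _
    have h1 : HasDerivAt (fun z : ℝ => -(z - m) ^ 2 / (2 * v)) (-(x - m) / v) x := by
      have : HasDerivAt (fun z : ℝ => -(z - m) ^ 2 / (2 * v))
          (-(2 * (x - m) ^ 1 * 1) / (2 * v)) x := by
        exact (((hasDerivAt_id x).sub_const m).pow 2).neg.div_const (2 * v)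
      convert this using 1
      field_simp
    have h2 := (h1.exp).const_mul (-v)
    refine h2.congr_deriv ?_
    field_simp
  have hint : IntegrableOn (fun z => (z - m) * Real.exp (-(z - m) ^ 2 / (2 * v)))
      (Set.Ioi (0:ℝ)) := by
    have := (gauss_mul_integrable hv m).sub ((gauss_integrable hv m).const_mul m)
    refine (this.congr ?_).integrableOn
    filter_upwards with z
    simp only [Pi.sub_apply]; ring
  have htend : Filter.Tendsto (fun z => -v * Real.exp (-(z - m) ^ 2 / (2 * v)))
      Filter.atTop (nhds 0) := by
    have h0 : Filter.Tendsto (fun z : ℝ => -(z - m) ^ 2 / (2 * v)) Filter.atTop Filter.atBot := by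
      apply Filter.Tendsto.atBot_div_const (by positivity)
      apply Filter.tendsto_neg_atBot_iff.mpr
      have h1 : Filter.Tendsto (fun z : ℝ => z - m) Filter.atTop Filter.atTop :=
        Filter.tendsto_atTop_add_const_right _ (-m) Filter.tendsto_id
      exact Filter.Tendsto.comp (Filter.tendsto_pow_atTop (by norm_num)) h1
    have := (Real.tendsto_exp_atBot.comp h0).const_mul (-v)
    simpa using this
  have := integral_Ioi_of_hasDerivAt_of_tendsto' hderiv hint htend
  rw [this, zero_sub, neg_mul, neg_neg]
  congr 2
  ring



lemma stdNormalCDF_eq (x : ℝ) :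
    stdNormalCDF x = (Real.sqrt (2 * Real.pi))⁻¹ * ∫ t in Set.Iic x, Real.exp (-t ^ 2 / 2) := by
  rw [stdNormalCDF, integral_const_mul]

-- ∫_{Ioi 0} e^{-(z-m)^2/(2v)} = √v √(2π) Φ(m/√v)
lemma gauss_halfline {v : ℝ} (hv : 0 < v) (m : ℝ) :
    ∫ z in Set.Ioi (0:ℝ), Real.exp (-(z - m) ^ 2 / (2 * v))
      = Real.sqrt v * Real.sqrt (2 * Real.pi) * stdNormalCDF (m / Real.sqrt v) := by
  set c := Real.sqrt v with hc
  have hc0 : 0 < c := Real.sqrt_pos.mpr hv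
  have hcsq : c ^ 2 = v := Real.sq_sqrt hv.le
  have step1 : ∫ z in Set.Ioi (0:ℝ), Real.exp (-(z - m) ^ 2 / (2 * v))
      = ∫ z in Set.Ioi (0 - m), Real.exp (-z ^ 2 / (2 * v)) :=
    integral_Ioi_comp_sub (fun z => Real.exp (-z ^ 2 / (2 * v))) 0 m
  rw [step1, zero_sub]
  have step2 : ∀ z : ℝ, Real.exp (-z ^ 2 / (2 * v))
      = (fun t => Real.exp (-t ^ 2 / 2)) (z * c⁻¹) := by
    intro z
    simp only
    congr 1
    rw [mul_pow, ← hcsq]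
    field_simp
  simp_rw [step2]
  rw [integral_comp_mul_right_Ioi (fun t => Real.exp (-t ^ 2 / 2)) (-m) (inv_pos.mpr hc0)]
  rw [inv_inv, smul_eq_mul]
  have step3 : ∫ x in Set.Ioi (-m * c⁻¹), Real.exp (-x ^ 2 / 2)
      = ∫ x in Set.Iic (m / c), Real.exp (-x ^ 2 / 2) := by
    have h : -m * c⁻¹ = -(m / c) := by field_simp
    rw [h, ← integral_comp_neg_Iic]
    congr 1
    ext x
    congr 1
    rw [neg_pow]
    ring_nf
  rw [step3, stdNormalCDF_eq]
  field_simp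

lemma stdNormalCDF_symm (x : ℝ) : stdNormalCDF (-x) = 1 - stdNormalCDF x := by
  have hInt : Integrable (fun t : ℝ => Real.exp (-t ^ 2 / 2)) := by
    have := integrable_exp_neg_mul_sq (by norm_num : (0:ℝ) < 1/2)
    refine this.congr ?_
    filter_upwards with t
    congr 1; ring
  have htotal : ∫ t : ℝ, Real.exp (-t ^ 2 / 2) = Real.sqrt (2 * Real.pi) := by
    have h := integral_gaussian (1/2 : ℝ)
    rw [show (Real.pi/(1/2):ℝ) = 2 * Real.pi by ring] at h
    rw [← h]
    congr 1; ext t; congr 1; ring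
  have hsplit := integral_add_compl (measurableSet_Iic (a := x)) hInt
  rw [Set.compl_Iic] at hsplit
  have hneg : ∫ t in Set.Iic (-x), Real.exp (-t ^ 2 / 2)
      = ∫ t in Set.Ioi x, Real.exp (-t ^ 2 / 2) := by
    rw [show Set.Ioi x = Set.Ioi (-(-x)) by rw [neg_neg], ← integral_comp_neg_Iic]
    congr 1; ext t; rw [neg_pow]; ring_nf
  have hpi : (0:ℝ) < Real.sqrt (2 * Real.pi) := Real.sqrt_pos.mpr (by positivity)
  rw [stdNormalCDF_eq, stdNormalCDF_eq, hneg]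
  have : ∫ t in Set.Ioi x, Real.exp (-t ^ 2 / 2)
      = Real.sqrt (2 * Real.pi) - ∫ t in Set.Iic x, Real.exp (-t ^ 2 / 2) := by
    rw [← htotal]; linarith [hsplit]
  rw [this]
  field_simp

lemma gauss_mean_halfline {v : ℝ} (hv : 0 < v) (m : ℝ) :
    ∫ z in Set.Ioi (0:ℝ), z * Real.exp (-(z - m) ^ 2 / (2 * v))
      = v * Real.exp (-m ^ 2 / (2 * v))
        + m * (Real.sqrt v * Real.sqrt (2 * Real.pi) * stdNormalCDF (m / Real.sqrt v)) := by
  have hsplit : ∀ z : ℝ, z * Real.exp (-(z - m) ^ 2 / (2 * v))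
      = (z - m) * Real.exp (-(z - m) ^ 2 / (2 * v)) + m * Real.exp (-(z - m) ^ 2 / (2 * v)) := by
    intro z; ring
  rw [setIntegral_congr_fun measurableSet_Ioi (fun z _ => hsplit z)]
  rw [integral_add ?hf ?hg]
  · rw [gauss_ftc hv m, integral_const_mul, gauss_halfline hv m]
  case hf =>
    have := (gauss_mul_integrable hv m).sub ((gauss_integrable hv m).const_mul m)
    refine (this.congr ?_).integrableOn
    filter_upwards with z; simp only [Pi.sub_apply]; ring
  case hg => exact ((gauss_integrable hv m).const_mul m).integrableOn


theorem integral_Wq_deriv_gaussian (μ σ q r : ℝ) (hσ : 0 < σ) (hq : 0 < q) (hr : 0 < r) :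
    (∫ z in Set.Ioi (0 : ℝ),
        Wq' μ σ q z * (z / r) * (Real.sqrt (2 * Real.pi * σ ^ 2 * r))⁻¹ *
          Real.exp (-(z - μ * r) ^ 2 / (2 * σ ^ 2 * r)))
      = 2 / Real.sqrt (2 * Real.pi * σ ^ 2 * r) * Real.exp (-(r * μ ^ 2) / (2 * σ ^ 2)) +
        rho2 μ σ q * Real.exp (q * r) -
        rho μ σ q * Real.exp (q * r) *
          stdNormalCDF (-(r * Real.sqrt (μ ^ 2 + 2 * q * σ ^ 2)) / (σ * Real.sqrt r)) := by
  have hσ2 : (0:ℝ) < σ ^ 2 := by positivity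
  have hv : (0:ℝ) < σ ^ 2 * r := by positivity
  set s := Real.sqrt (μ ^ 2 + 2 * q * σ ^ 2) with hs_def
  have hspos : 0 < s := Real.sqrt_pos.mpr (by positivity)
  have hssq : s ^ 2 = μ ^ 2 + 2 * q * σ ^ 2 := Real.sq_sqrt (by positivity)
  have hrho2 : rho2 μ σ q = (s - μ) / σ ^ 2 := rfl
  have hrho1 : rho1 μ σ q = (s + μ) / σ ^ 2 := rfl
  have hrho : rho μ σ q = 2 * s / σ ^ 2 := by
    rw [rho, hrho1, hrho2]; ring
  have hρpos : 0 < rho μ σ q := by rw [hrho]; positivity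
  -- exponential identities
  have e2 : ∀ z : ℝ, Real.exp (rho2 μ σ q * z) * Real.exp (-(z - μ * r) ^ 2 / (2 * σ ^ 2 * r))
      = Real.exp (q * r) * Real.exp (-(z - r * s) ^ 2 / (2 * (σ ^ 2 * r))) := by
    intro z
    rw [← Real.exp_add, ← Real.exp_add, hrho2]
    congr 1
    field_simp
    linear_combination (r ^ 2) * hssq
  have e1 : ∀ z : ℝ, Real.exp (-(rho1 μ σ q) * z) * Real.exp (-(z - μ * r) ^ 2 / (2 * σ ^ 2 * r))
      = Real.exp (q * r) * Real.exp (-(z - -(r * s)) ^ 2 / (2 * (σ ^ 2 * r))) := by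
    intro z
    rw [← Real.exp_add, ← Real.exp_add, hrho1]
    congr 1
    field_simp
    linear_combination (r ^ 2) * hssq
  set C : ℝ := 2 / (σ ^ 2 * rho μ σ q) / r * (Real.sqrt (2 * Real.pi * σ ^ 2 * r))⁻¹ *
      Real.exp (q * r) with hC_def
  have hcong : ∀ z ∈ Set.Ioi (0:ℝ),
      Wq' μ σ q z * (z / r) * (Real.sqrt (2 * Real.pi * σ ^ 2 * r))⁻¹ *
          Real.exp (-(z - μ * r) ^ 2 / (2 * σ ^ 2 * r))
        = C * (rho2 μ σ q * (z * Real.exp (-(z - r * s) ^ 2 / (2 * (σ ^ 2 * r))))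
            + rho1 μ σ q * (z * Real.exp (-(z - -(r * s)) ^ 2 / (2 * (σ ^ 2 * r))))) := by
    intro z _
    rw [Wq', hC_def]
    linear_combination
      (2 / (σ ^ 2 * rho μ σ q) * rho2 μ σ q * (z / r) *
        (Real.sqrt (2 * Real.pi * σ ^ 2 * r))⁻¹) * e2 z +
      (2 / (σ ^ 2 * rho μ σ q) * rho1 μ σ q * (z / r) *
        (Real.sqrt (2 * Real.pi * σ ^ 2 * r))⁻¹) * e1 z
  rw [setIntegral_congr_fun measurableSet_Ioi hcong, integral_const_mul,
    integral_add (((gauss_mul_integrable hv (r * s)).const_mul _).integrableOn)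
      (((gauss_mul_integrable hv (-(r * s))).const_mul _).integrableOn),
    integral_const_mul, integral_const_mul,
    gauss_mean_halfline hv (r * s), gauss_mean_halfline hv (-(r * s))]
  -- simplify sqrt terms
  have hsq : Real.sqrt (σ ^ 2 * r) = σ * Real.sqrt r := by
    rw [Real.sqrt_mul (sq_nonneg σ), Real.sqrt_sq hσ.le]
  have hsplitsqrt : Real.sqrt (2 * Real.pi * σ ^ 2 * r)
      = Real.sqrt (2 * Real.pi) * (σ * Real.sqrt r) := by
    rw [show 2 * Real.pi * σ ^ 2 * r = (2 * Real.pi) * (σ ^ 2 * r) by ring,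
      Real.sqrt_mul (by positivity), hsq]
  have hargpos : r * s / Real.sqrt (σ ^ 2 * r) = -(-(r * s) / (σ * Real.sqrt r)) := by
    rw [hsq]; ring
  have hargneg : -(r * s) / Real.sqrt (σ ^ 2 * r) = -(r * s) / (σ * Real.sqrt r) := by
    rw [hsq]
  rw [hargpos, hargneg, stdNormalCDF_symm]
  -- exp identity
  have hE : Real.exp (q * r) * Real.exp (-(r * s) ^ 2 / (2 * (σ ^ 2 * r)))
      = Real.exp (-(r * μ ^ 2) / (2 * σ ^ 2)) := by
    rw [← Real.exp_add]
    congr 1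
    field_simp
    linear_combination (-1 : ℝ) * hssq
  have hE' : Real.exp (-(-(r * s)) ^ 2 / (2 * (σ ^ 2 * r)))
      = Real.exp (-(r * s) ^ 2 / (2 * (σ ^ 2 * r))) := by
    congr 1; ring
  rw [hE', hC_def, hsplitsqrt, hrho, hrho2]
  rw [show rho1 μ σ q = (s + μ) / σ ^ 2 from rfl]
  have hsqrtr : (0:ℝ) < Real.sqrt r := Real.sqrt_pos.mpr hr
  have hsqrt2pi : (0:ℝ) < Real.sqrt (2 * Real.pi) := Real.sqrt_pos.mpr (by positivity)
  set Φβ := stdNormalCDF (-(r * s) / (σ * Real.sqrt r))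
  have hE2 : Real.exp (r * q) * Real.exp (-(s ^ 2 * r / (2 * σ ^ 2)))
      = Real.exp (-(r * μ ^ 2 / (2 * σ ^ 2))) := by
    rw [← neg_div (2 * σ ^ 2) (r * μ ^ 2), ← hE, ← Real.exp_add, ← Real.exp_add]
    congr 1
    rw [show -(r * s) ^ 2 / (2 * (σ ^ 2 * r)) = -(s ^ 2 * r / (2 * σ ^ 2)) by
      rw [neg_div, neg_inj, div_eq_div_iff (by positivity) (by positivity)]; ring]
    ring
  field_simp
  linear_combination (2 * s * σ ^ 2) * hE2 +
    (Real.exp (r * q) * s * Real.sqrt (2 * Real.pi) * (s - μ - 2 * s * Φβ)) * hsq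
end

section
/- Let μ ∈ ℝ, σ > 0, q > 0, r > 0, and let W^{(q)} be the explicit q-scale function of the linear Brownian motion model. For x < 0, one has ∫_{−x}^∞ (2/(σ²ρ))(e^{ρ₂(x+z)} − e^{−ρ₁(x+z)}) (z/r) (2πσ²r)^{−1/2} e^{−(z−μr)²/(2σ²r)} dz = e^{qr} ( e^{ρ₂ x} [1 − Φ((−x − r√(μ²+2qσ²))/(σ√r))] + e^{−ρ₁ x} [1 − Φ((−x + r√(μ²+2qσ²))/(σ√r))] ). -/
open MeasureTheory Real Set Filter

lemma shift_Ioi (g : ℝ → ℝ) (a c : ℝ) :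
    (∫ x in Set.Ioi a, g (x + c)) = ∫ x in Set.Ioi (a + c), g x := by
  rw [← integral_indicator measurableSet_Ioi, ← integral_indicator measurableSet_Ioi,
    ← integral_add_right_eq_self (fun x => (Set.Ioi (a + c)).indicator g x) c]
  congr 1
  ext t
  by_cases h : t ∈ Set.Ioi a
  · rw [Set.indicator_of_mem h, Set.indicator_of_mem (by simpa using h.out)]
  · rw [Set.indicator_of_notMem h, Set.indicator_of_notMem (by simpa using h)]

lemma integrable_phi : Integrable (fun t : ℝ => Real.exp (-t ^ 2 / 2)) := by
  have := integrable_exp_neg_mul_sq (by norm_num : (0:ℝ) < 1/2)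
  convert this using 2 with t
  ring_nf

lemma integrable_t_phi : Integrable (fun t : ℝ => t * Real.exp (-t ^ 2 / 2)) := by
  have := integrable_rpow_mul_exp_neg_mul_sq (by norm_num : (0:ℝ) < 1/2)
    (by norm_num : (-1:ℝ) < 1)
  simp only [Real.rpow_one] at this
  convert this using 2 with t
  ring_nf

lemma total_phi : (∫ t : ℝ, Real.exp (-t ^ 2 / 2)) = Real.sqrt (2 * Real.pi) := by
  have := integral_gaussian (1/2)
  rw [show (π / (1/2)) = 2 * π by ring] at this
  rw [← this]
  congr 1 with t
  ring_nf

lemma tail_phi (c : ℝ) :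
    (∫ t in Set.Ioi c, (Real.sqrt (2 * Real.pi))⁻¹ * Real.exp (-t ^ 2 / 2))
      = 1 - stdNormalCDF c := by
  have hint : Integrable (fun t : ℝ => (Real.sqrt (2 * Real.pi))⁻¹ * Real.exp (-t ^ 2 / 2)) :=
    integrable_phi.const_mul _
  have hsplit := intervalIntegral.integral_Iic_add_Ioi (b := c) hint.integrableOn hint.integrableOn
  have htot : (∫ t : ℝ, (Real.sqrt (2 * Real.pi))⁻¹ * Real.exp (-t ^ 2 / 2)) = 1 := by
    rw [integral_const_mul, total_phi, inv_mul_cancel₀]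
    positivity
  rw [htot] at hsplit
  rw [stdNormalCDF]
  linarith

lemma tail_t_phi (c : ℝ) :
    (∫ t in Set.Ioi c, t * Real.exp (-t ^ 2 / 2)) = Real.exp (-c ^ 2 / 2) := by
  have hderiv : ∀ t ∈ Set.Ici c, HasDerivAt (fun u : ℝ => -Real.exp (-u ^ 2 / 2))
      (t * Real.exp (-t ^ 2 / 2)) t := by
    intro t _
    have h1 : HasDerivAt (fun u : ℝ => -u ^ 2 / 2) (-t) t := by
      have := ((hasDerivAt_pow 2 t).neg).div_const 2
      refine this.congr_deriv ?_
      norm_num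
      ring
    have := (h1.exp).neg
    refine this.congr_deriv ?_
    ring
  have htend : Tendsto (fun u : ℝ => -Real.exp (-u ^ 2 / 2)) atTop (nhds 0) := by
    rw [show (0:ℝ) = -0 by ring]
    apply Tendsto.neg
    apply Real.tendsto_exp_atBot.comp
    have h2 : Tendsto (fun u : ℝ => u ^ 2) atTop atTop := by
      exact tendsto_pow_atTop (by norm_num)
    have := tendsto_neg_atTop_atBot.comp (h2.atTop_div_const (by norm_num : (0:ℝ) < 2))
    convert this using 2 with u
    simp [Function.comp]
    ring
  have := integral_Ioi_of_hasDerivAt_of_tendsto' hderiv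
    (integrable_t_phi.integrableOn) htend
  rw [this]
  ring

lemma gaussian_moment (a m s : ℝ) (hs : 0 < s) :
    (∫ z in Set.Ioi a, z * ((Real.sqrt (2 * Real.pi))⁻¹ * s⁻¹ *
        Real.exp (-((z - m) / s) ^ 2 / 2)))
      = m * (1 - stdNormalCDF ((a - m) / s)) +
        s * ((Real.sqrt (2 * Real.pi))⁻¹ * Real.exp (-((a - m) / s) ^ 2 / 2)) := by
  set f : ℝ → ℝ := fun z => z * ((Real.sqrt (2 * Real.pi))⁻¹ * s⁻¹ *
    Real.exp (-((z - m) / s) ^ 2 / 2)) with hf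
  have h1 : (∫ z in Set.Ioi a, f z) = ∫ z in Set.Ioi (a - m), f (z + m) := by
    rw [shift_Ioi f (a - m) m, sub_add_cancel]
  have h2 := integral_comp_mul_left_Ioi (fun z => f (z + m)) ((a - m) / s) hs
  rw [mul_div_cancel₀ _ hs.ne'] at h2
  have hsne : s ≠ 0 := hs.ne'
  have h3 : ∀ t : ℝ, f (s * t + m) = s⁻¹ * ((s * t + m) *
      ((Real.sqrt (2 * Real.pi))⁻¹ * Real.exp (-t ^ 2 / 2))) := by
    intro t
    rw [hf]
    simp only
    rw [show (s * t + m - m) / s = t by field_simp; ring]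
    ring
  simp only [smul_eq_mul] at h2
  have h2' : (∫ z in Set.Ioi (a - m), f (z + m))
      = s * ∫ t in Set.Ioi ((a - m) / s), f (s * t + m) := by
    rw [h2]; field_simp
  rw [h1, h2']
  simp only [h3]
  rw [integral_const_mul]
  have h4 : (∫ t in Set.Ioi ((a - m) / s), (s * t + m) *
      ((Real.sqrt (2 * Real.pi))⁻¹ * Real.exp (-t ^ 2 / 2)))
      = s * ((Real.sqrt (2 * Real.pi))⁻¹ * Real.exp (-((a - m) / s) ^ 2 / 2)) +
        m * (1 - stdNormalCDF ((a - m) / s)) := by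
    have hi1 : IntegrableOn (fun t : ℝ => (s * (Real.sqrt (2 * Real.pi))⁻¹) *
        (t * Real.exp (-t ^ 2 / 2))) (Set.Ioi ((a - m) / s)) :=
      (integrable_t_phi.const_mul _).integrableOn
    have hi2 : IntegrableOn (fun t : ℝ => m *
        ((Real.sqrt (2 * Real.pi))⁻¹ * Real.exp (-t ^ 2 / 2))) (Set.Ioi ((a - m) / s)) :=
      ((integrable_phi.const_mul _).const_mul _).integrableOn
    have heq : ∀ t : ℝ, (s * t + m) * ((Real.sqrt (2 * Real.pi))⁻¹ * Real.exp (-t ^ 2 / 2))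
        = (s * (Real.sqrt (2 * Real.pi))⁻¹) * (t * Real.exp (-t ^ 2 / 2)) +
          m * ((Real.sqrt (2 * Real.pi))⁻¹ * Real.exp (-t ^ 2 / 2)) := by
      intro t; ring
    simp only [heq]
    rw [integral_add hi1 hi2, integral_const_mul, integral_const_mul, tail_t_phi, tail_phi]
    ring
  rw [h4]
  field_simp
  ring

lemma integrable_gauss_moment (m s : ℝ) (hs : 0 < s) :
    Integrable (fun z : ℝ => z * ((Real.sqrt (2 * Real.pi))⁻¹ * s⁻¹ *
      Real.exp (-((z - m) / s) ^ 2 / 2))) := by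
  have hb : (0:ℝ) < 1 / (2 * s ^ 2) := by positivity
  have h1 : Integrable (fun u : ℝ => (u + m) * Real.exp (-(1 / (2 * s ^ 2)) * u ^ 2)) := by
    have ha := integrable_rpow_mul_exp_neg_mul_sq hb (by norm_num : (-1:ℝ) < 1)
    simp only [Real.rpow_one] at ha
    have := ha.add ((integrable_exp_neg_mul_sq hb).const_mul m)
    refine this.congr (Filter.Eventually.of_forall fun u => ?_)
    simp only [Pi.add_apply]
    ring
  have h2 := (h1.comp_sub_right m).const_mul ((Real.sqrt (2 * Real.pi))⁻¹ * s⁻¹)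
  convert h2 using 1
  funext z
  rw [show z - m + m = z by ring, show -((z - m) / s) ^ 2 / 2
    = -(1 / (2 * s ^ 2)) * (z - m) ^ 2 by ring]
  ring


theorem parisian_scale_function_brownian_neg (μ σ q r : ℝ) (hσ : 0 < σ) (hq : 0 < q)
    (hr : 0 < r) (x : ℝ) (hx : x < 0) :
    (∫ z in Set.Ioi (-x),
        2 / (σ ^ 2 * rho μ σ q) *
            (Real.exp (rho2 μ σ q * (x + z)) - Real.exp (-(rho1 μ σ q) * (x + z))) *
          (z / r) * (Real.sqrt (2 * Real.pi * σ ^ 2 * r))⁻¹ *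
          Real.exp (-(z - μ * r) ^ 2 / (2 * σ ^ 2 * r)))
      = Real.exp (q * r) *
          (Real.exp (rho2 μ σ q * x) *
              (1 - stdNormalCDF ((-x - r * Real.sqrt (μ ^ 2 + 2 * q * σ ^ 2)) /
                (σ * Real.sqrt r))) +
            Real.exp (-(rho1 μ σ q) * x) *
              (1 - stdNormalCDF ((-x + r * Real.sqrt (μ ^ 2 + 2 * q * σ ^ 2)) /
                (σ * Real.sqrt r)))) := by
  have hpos : (0:ℝ) < μ ^ 2 + 2 * q * σ ^ 2 := by positivity
  set Δ := Real.sqrt (μ ^ 2 + 2 * q * σ ^ 2) with hΔdef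
  have hΔ : 0 < Δ := Real.sqrt_pos.mpr hpos
  have hΔ2 : Δ ^ 2 = μ ^ 2 + 2 * q * σ ^ 2 := Real.sq_sqrt hpos.le
  set s := σ * Real.sqrt r with hsdef
  have hs : 0 < s := by positivity
  have hs2 : s ^ 2 = σ ^ 2 * r := by
    rw [hsdef, mul_pow, Real.sq_sqrt hr.le]
  have hrho1 : rho1 μ σ q = (Δ + μ) / σ ^ 2 := by rw [rho1, hΔdef]
  have hrho2 : rho2 μ σ q = (Δ - μ) / σ ^ 2 := by rw [rho2, hΔdef]
  have hrho : σ ^ 2 * rho μ σ q = 2 * Δ := by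
    rw [rho, hrho1, hrho2]; field_simp; ring
  have hsqrt : Real.sqrt (2 * Real.pi * σ ^ 2 * r) = Real.sqrt (2 * Real.pi) * s := by
    rw [show 2 * Real.pi * σ ^ 2 * r = (2 * Real.pi) * (σ * Real.sqrt r) ^ 2 by
      rw [mul_pow, Real.sq_sqrt hr.le]; ring,
      Real.sqrt_mul (by positivity), Real.sqrt_sq (by positivity)]
  -- pointwise identity
  have key : ∀ z : ℝ,
      2 / (σ ^ 2 * rho μ σ q) *
          (Real.exp (rho2 μ σ q * (x + z)) - Real.exp (-(rho1 μ σ q) * (x + z))) *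
        (z / r) * (Real.sqrt (2 * Real.pi * σ ^ 2 * r))⁻¹ *
        Real.exp (-(z - μ * r) ^ 2 / (2 * σ ^ 2 * r))
      = (Real.exp (q * r) * Real.exp (rho2 μ σ q * x) / (Δ * r)) *
          (z * ((Real.sqrt (2 * Real.pi))⁻¹ * s⁻¹ *
            Real.exp (-((z - Δ * r) / s) ^ 2 / 2)))
        - (Real.exp (q * r) * Real.exp (-(rho1 μ σ q) * x) / (Δ * r)) *
          (z * ((Real.sqrt (2 * Real.pi))⁻¹ * s⁻¹ *
            Real.exp (-((z - -(Δ * r)) / s) ^ 2 / 2))) := by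
    intro z
    have e2 : Real.exp (rho2 μ σ q * (x + z)) * Real.exp (-(z - μ * r) ^ 2 / (2 * σ ^ 2 * r))
        = Real.exp (q * r) * Real.exp (rho2 μ σ q * x) *
          Real.exp (-((z - Δ * r) / s) ^ 2 / 2) := by
      rw [← Real.exp_add, ← Real.exp_add, ← Real.exp_add]
      congr 1
      rw [hrho2, div_pow, hs2]
      field_simp
      linear_combination r^2 * hΔ2
    have e1 : Real.exp (-(rho1 μ σ q) * (x + z)) * Real.exp (-(z - μ * r) ^ 2 / (2 * σ ^ 2 * r))
        = Real.exp (q * r) * Real.exp (-(rho1 μ σ q) * x) *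
          Real.exp (-((z - -(Δ * r)) / s) ^ 2 / 2) := by
      rw [← Real.exp_add, ← Real.exp_add, ← Real.exp_add]
      congr 1
      rw [hrho1, div_pow, hs2]
      field_simp
      linear_combination r^2 * hΔ2
    rw [hsqrt, hrho, mul_inv]
    linear_combination (z / (Δ * r) * ((Real.sqrt (2 * Real.pi))⁻¹ * s⁻¹)) * e2
      - (z / (Δ * r) * ((Real.sqrt (2 * Real.pi))⁻¹ * s⁻¹)) * e1
  rw [setIntegral_congr_fun measurableSet_Ioi (fun z _ => key z)]
  have hi2 : IntegrableOn (fun z : ℝ => (Real.exp (q * r) * Real.exp (rho2 μ σ q * x) / (Δ * r)) *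
      (z * ((Real.sqrt (2 * Real.pi))⁻¹ * s⁻¹ * Real.exp (-((z - Δ * r) / s) ^ 2 / 2))))
      (Set.Ioi (-x)) :=
    ((integrable_gauss_moment (Δ * r) s hs).const_mul _).integrableOn
  have hi1 : IntegrableOn (fun z : ℝ => (Real.exp (q * r) * Real.exp (-(rho1 μ σ q) * x) / (Δ * r)) *
      (z * ((Real.sqrt (2 * Real.pi))⁻¹ * s⁻¹ * Real.exp (-((z - -(Δ * r)) / s) ^ 2 / 2))))
      (Set.Ioi (-x)) :=
    ((integrable_gauss_moment (-(Δ * r)) s hs).const_mul _).integrableOn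
  rw [integral_sub hi2 hi1, integral_const_mul, integral_const_mul,
    gaussian_moment (-x) (Δ * r) s hs, gaussian_moment (-x) (-(Δ * r)) s hs,
    show (-x - Δ * r) / s = (-x - r * Δ) / s by ring_nf,
    show (-x - -(Δ * r)) / s = (-x + r * Δ) / s by ring_nf]
  have hE : Real.exp (rho2 μ σ q * x) * Real.exp (-((-x - r * Δ) / s) ^ 2 / 2)
      = Real.exp (-(rho1 μ σ q) * x) * Real.exp (-((-x + r * Δ) / s) ^ 2 / 2) := by
    rw [← Real.exp_add, ← Real.exp_add]
    congr 1
    rw [hrho1, hrho2, div_pow, div_pow, hs2]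
    field_simp
    ring
  have hD : (Δ * r)⁻¹ * (Δ * r) = 1 := inv_mul_cancel₀ (by positivity)
  linear_combination
    (Real.exp (q * r) * Real.exp (rho2 μ σ q * x) *
        (1 - stdNormalCDF ((-x - r * Δ) / s)) +
      Real.exp (q * r) * Real.exp (-(rho1 μ σ q) * x) *
        (1 - stdNormalCDF ((-x + r * Δ) / s))) * hD +
    ((Δ * r)⁻¹ * s * (Real.sqrt (2 * Real.pi))⁻¹ * Real.exp (q * r)) * hE
end

section
/- Let β > 0 and let V : [0,∞) → ℝ be strictly increasing. Let (c₁*, c₂*) with c₁* ≥ 0 and c₂* > c₁* + β minimize g(c₁,c₂) = (V(c₂) − V(c₁))/(c₂ − c₁ − β) over dom(g) = {(c₁,c₂) : c₁ ≥ 0, c₂ > c₁ + β}. Define v : [0,∞) → ℝ by v(x) = (c₂* − c₁* − β) V(x)/(V(c₂*) − V(c₁*)) for x ≤ c₂* and v(x) = x − c₁* − β + (c₂* − c₁* − β) V(c₁*)/(V(c₂*) − V(c₁*)) for x > c₂*. Then for all x ≥ y ≥ 0 one has v(x) − v(y) ≥ x − y − β. -/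
/- Key inequality (Lemma 6): for the net present value v of the impulse
   (c₁*,c₂*) dividend policy, built from an abstract strictly increasing
   function V (playing the role of the Parisian refracted scale function),
   one has v(x) − v(y) ≥ x − y − β whenever x ≥ y ≥ 0, provided (c₁*,c₂*)
   minimizes g(c₁,c₂) = (V(c₂) − V(c₁))/(c₂ − c₁ − β) over
   dom(g) = {(c₁,c₂) : c₁ ≥ 0, c₂ > c₁ + β}. -/

theorem impulse_value_function_inequality (V : ℝ → ℝ) (β c₁ c₂ : ℝ)
    (hβ : 0 < β) (hV : StrictMonoOn V (Set.Ici 0))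
    (hc₁ : 0 ≤ c₁) (hc₂ : c₁ + β < c₂)
    (hmin : ∀ d₁ d₂ : ℝ, 0 ≤ d₁ → d₁ + β < d₂ →
      (V c₂ - V c₁) / (c₂ - c₁ - β) ≤ (V d₂ - V d₁) / (d₂ - d₁ - β)) :
    ∀ x y : ℝ, 0 ≤ y → y ≤ x →
      (if x ≤ c₂ then (c₂ - c₁ - β) * V x / (V c₂ - V c₁)
        else x - c₁ - β + (c₂ - c₁ - β) * V c₁ / (V c₂ - V c₁)) -
      (if y ≤ c₂ then (c₂ - c₁ - β) * V y / (V c₂ - V c₁)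
        else y - c₁ - β + (c₂ - c₁ - β) * V c₁ / (V c₂ - V c₁))
      ≥ x - y - β := by
  have hc₂0 : (0:ℝ) ≤ c₂ := le_of_lt (lt_of_le_of_lt (by linarith) hc₂)
  have hA : 0 < V c₂ - V c₁ :=
    sub_pos.mpr (hV (Set.mem_Ici.mpr hc₁) (Set.mem_Ici.mpr hc₂0) (by linarith))
  have ha : 0 < c₂ - c₁ - β := by linarith
  -- core lemma for x, y ≤ c₂
  have key : ∀ y x : ℝ, 0 ≤ y → y ≤ x → x ≤ c₂ →
      (c₂ - c₁ - β) * V x / (V c₂ - V c₁) - (c₂ - c₁ - β) * V y / (V c₂ - V c₁)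
        ≥ x - y - β := by
    intro y x hy hyx hx
    have hVyx : V y ≤ V x :=
      hV.monotoneOn (Set.mem_Ici.mpr hy) (Set.mem_Ici.mpr (le_trans hy hyx)) hyx
    by_cases hb : x ≤ y + β
    · have h1 : 0 ≤ (c₂ - c₁ - β) * V x / (V c₂ - V c₁)
          - (c₂ - c₁ - β) * V y / (V c₂ - V c₁) := by
        have he : (c₂ - c₁ - β) * V x / (V c₂ - V c₁)
            - (c₂ - c₁ - β) * V y / (V c₂ - V c₁)
            = (c₂ - c₁ - β) * (V x - V y) / (V c₂ - V c₁) := by ring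
        rw [he]
        exact div_nonneg (mul_nonneg ha.le (sub_nonneg.mpr hVyx)) hA.le
      linarith
    · push_neg at hb
      have hbx : 0 < x - y - β := by linarith
      have h2 := hmin y x hy (by linarith)
      rw [div_le_div_iff₀ ha hbx] at h2
      rw [ge_iff_le, div_sub_div_same, le_div_iff₀ hA]
      nlinarith
  intro x y hy hyx
  by_cases hxc : x ≤ c₂
  · have hyc : y ≤ c₂ := le_trans hyx hxc
    simp only [if_pos hxc, if_pos hyc]
    exact key y x hy hyx hxc
  · push_neg at hxc
    by_cases hyc : y ≤ c₂
    · simp only [if_neg (not_le.mpr hxc), if_pos hyc]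
      have h1 := key y c₂ hy hyc le_rfl
      have h2 : (c₂ - c₁ - β) * V c₂ / (V c₂ - V c₁)
          - (c₂ - c₁ - β) * V c₁ / (V c₂ - V c₁) = c₂ - c₁ - β := by
        rw [div_sub_div_same]
        field_simp
      linarith
    · simp only [if_neg (not_le.mpr hxc), if_neg hyc]
      linarith
end
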